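/- arXiv:1203.5973 — 2 statements merged into one kernel-verified Lean document; each statement's English description precedes it below -/
import Mathlib

section
/- (Cheeger-type bound) Let λ₁ be the first nonzero eigenvalue of −L_HS on a compact hypersurface S (closed or Dirichlet eigenvalue problem). Assuming the variational characterization λ₁ = inf ∫_S |grad_HS ψ|² dσ_H / ∫_S ψ² dσ_H over admissible ψ, and the characterization Isop(S) = inf ∫_S |grad_HS ψ| dσ_H / ∫_S |ψ| dσ_H, it follows that λ₁ ≥ (Isop(S))² / 4. -/
/-!
Cheeger's argument: test the isoperimetric characterization with `ψ²`. The chain rule gives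
`Isop ∫ ψ² ≤ 2 ∫ |ψ| |grad ψ|`, and by Cauchy–Schwarz the right-hand side is at most
`2 (∫ ψ²)^{1/2} (∫ |grad ψ|²)^{1/2}`; squaring yields `Isop² / 4 ≤ ∫ |grad ψ|² / ∫ ψ²` for every
admissible `ψ`, hence for the infimum `λ₁`.
-/

open MeasureTheory

namespace MeasureTheory

variable {α : Type*} [MeasurableSpace α] {μ : Measure α}

/-- Proved through the discriminant of `x ↦ ∫ (x f - g)² ≥ 0`, which avoids the measurability
hypotheses of Hölder's inequality. -/
theorem sq_integral_mul_le_integral_sq_mul_integral_sq {f g : α → ℝ}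
    (hf : Integrable (fun a => f a ^ 2) μ) (hg : Integrable (fun a => g a ^ 2) μ)
    (hfg : Integrable (fun a => f a * g a) μ) :
    (∫ a, f a * g a ∂μ) ^ 2 ≤ (∫ a, f a ^ 2 ∂μ) * ∫ a, g a ^ 2 ∂μ := by
  have hquad : ∀ x : ℝ, 0 ≤ (∫ a, f a ^ 2 ∂μ) * (x * x) + (-2 * ∫ a, f a * g a ∂μ) * x
      + ∫ a, g a ^ 2 ∂μ := by
    intro x
    have hexpand : ∫ a, (x * f a - g a) ^ 2 ∂μ = (∫ a, f a ^ 2 ∂μ) * (x * x)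
        + (-2 * ∫ a, f a * g a ∂μ) * x + ∫ a, g a ^ 2 ∂μ := by
      have hpt : (fun a => (x * f a - g a) ^ 2)
          = fun a => (x * x) * f a ^ 2 + (-2 * x) * (f a * g a) + g a ^ 2 := by
        funext a; ring
      have hlin : Integrable (fun a => (x * x) * f a ^ 2 + (-2 * x) * (f a * g a)) μ :=
        (hf.const_mul _).add (hfg.const_mul _)
      rw [hpt, integral_add hlin hg,
        integral_add (hf.const_mul _) (hfg.const_mul _), integral_const_mul, integral_const_mul]
      ring
    exact hexpand ▸ integral_nonneg fun a => sq_nonneg _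
  have := discrim_le_zero hquad
  rw [discrim] at this
  nlinarith

end MeasureTheory

theorem sq_div_four_le_integral_sq_div_integral_sq {α : Type*} [MeasurableSpace α]
    {μ : Measure α} {f g : α → ℝ} {c : ℝ} (hc : 0 ≤ c)
    (hf : Integrable (fun a => f a ^ 2) μ) (hg : Integrable (fun a => g a ^ 2) μ)
    (hfg : Integrable (fun a => |f a| * |g a|) μ) (hpos : 0 < ∫ a, f a ^ 2 ∂μ)
    (hcheeger : c * ∫ a, f a ^ 2 ∂μ ≤ 2 * ∫ a, |f a| * |g a| ∂μ) :
    c ^ 2 / 4 ≤ (∫ a, g a ^ 2 ∂μ) / ∫ a, f a ^ 2 ∂μ := by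
  have hcs := sq_integral_mul_le_integral_sq_mul_integral_sq (μ := μ)
    (by simpa only [sq_abs] using hf) (by simpa only [sq_abs] using hg) hfg
  simp only [sq_abs] at hcs
  have hlhs : 0 ≤ c * ∫ a, f a ^ 2 ∂μ := mul_nonneg hc hpos.le
  rw [div_le_div_iff₀ (by norm_num) hpos]
  nlinarith [pow_le_pow_left₀ hlhs hcheeger 2]

theorem stmt_8_general {S : Type*} [MeasurableSpace S] (σ : Measure S)
    (grad : (S → ℝ) → S → ℝ)
    (T T' : Set (S → ℝ))
    (lam1 Isop : ℝ) (hIsopnn : 0 ≤ Isop)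
    (hsq : ∀ ψ ∈ T, (fun s => ψ s ^ 2) ∈ T')
    (hchain : ∀ ψ ∈ T, ∀ s, |grad (fun t => ψ t ^ 2) s| = 2 * |ψ s| * |grad ψ s|)
    (hint : ∀ ψ ∈ T, Integrable (fun s => ψ s ^ 2) σ ∧
      Integrable (fun s => (grad ψ s) ^ 2) σ ∧
      Integrable (fun s => |ψ s| * |grad ψ s|) σ)
    (hpos : ∀ ψ ∈ T, 0 < ∫ s, ψ s ^ 2 ∂σ)
    (hIsopChar : ∀ φ ∈ T', Isop * ∫ s, |φ s| ∂σ ≤ ∫ s, |grad φ s| ∂σ)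
    (hlam : IsGLB
      ((fun ψ => (∫ s, (grad ψ s) ^ 2 ∂σ) / ∫ s, ψ s ^ 2 ∂σ) '' T) lam1) :
    Isop ^ 2 / 4 ≤ lam1 := by
  refine hlam.2 ?_
  rintro _ ⟨ψ, hψ, rfl⟩
  obtain ⟨hψ2, hgrad2, hprod⟩ := hint ψ hψ
  have hcheeger : Isop * ∫ s, ψ s ^ 2 ∂σ ≤ 2 * ∫ s, |ψ s| * |grad ψ s| ∂σ := by
    have h := hIsopChar _ (hsq ψ hψ)
    simpa only [abs_pow, sq_abs, hchain ψ hψ, mul_assoc, integral_const_mul] using h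
  exact sq_div_four_le_integral_sq_div_integral_sq hIsopnn hψ2 hgrad2 hprod (hpos ψ hψ) hcheeger

/-- Cheeger-type bound: if `λ₁` is the infimum of the Rayleigh quotients
`∫ |grad_HS ψ|² / ∫ ψ²` over admissible functions, and `Isop` satisfies the
Federer–Fleming characterization `Isop ∫|φ| ≤ ∫|grad_HS φ|` on admissible functions
(with squares of eigen-test-functions admissible and the chain rule holding), then
`λ₁ ≥ Isop² / 4`. -/
theorem stmt_8 {S : Type*} [MeasurableSpace S] (σ : Measure S)
    (grad : (S → ℝ) → S → ℝ)
    (T T' : Set (S → ℝ)) (hTne : T.Nonempty)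
    (lam1 Isop : ℝ) (hIsopnn : 0 ≤ Isop)
    (hsq : ∀ ψ ∈ T, (fun s => ψ s ^ 2) ∈ T')
    (hchain : ∀ ψ ∈ T, ∀ s, |grad (fun t => ψ t ^ 2) s| = 2 * |ψ s| * |grad ψ s|)
    (hint : ∀ ψ ∈ T, Integrable (fun s => ψ s ^ 2) σ ∧
      Integrable (fun s => (grad ψ s) ^ 2) σ ∧
      Integrable (fun s => |ψ s| * |grad ψ s|) σ)
    (hpos : ∀ ψ ∈ T, 0 < ∫ s, ψ s ^ 2 ∂σ)
    (hIsopChar : ∀ φ ∈ T', Isop * ∫ s, |φ s| ∂σ ≤ ∫ s, |grad φ s| ∂σ)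
    (hlam : IsGLB
      ((fun ψ => (∫ s, (grad ψ s) ^ 2 ∂σ) / ∫ s, ψ s ^ 2 ∂σ) '' T) lam1) :
    Isop ^ 2 / 4 ≤ lam1 :=
  stmt_8_general σ grad T T' lam1 Isop hIsopnn hsq hchain hint hpos hIsopChar hlam
end

section
/- Let S be a compact C² hypersurface with boundary in a Carnot group, and suppose ψ is a C² function on S, k ∈ ℝ is such that the sets {ψ ≥ k} and {ψ ≤ k} each have σ_H-measure at least σ_H(S)/2. Then ∫_S |ψ − k|² dσ_H ≤ (4 / Isop₀(S)²) ∫_S |grad_HS ψ|² dσ_H, where Isop₀(S) is the Neumann-type isoperimetric constant. Moreover, if ∫_S ψ dσ_H = 0, then ∫_S ψ² dσ_H ≤ (4 / Isop₀(S)²) ∫_S |grad_HS ψ|² dσ_H. -/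
/-!
Write `f = ψ - k = f⁺ - f⁻` with `f⁺ = max 0 f` and `f⁻ = -min 0 f`, so that
`f² = (f⁺)² + (f⁻)²`. The isoperimetric inequality (constant `c = Isop₀`) applied to
`(f⁺)²` and `(f⁻)²`, whose horizontal gradients add up to at most `2 |f| |grad ψ|`, together
with the weighted AM–GM inequality `2ab ≤ (c/2) a² + (2/c) b²`, gives
`c ∫ f² ≤ (c/2) ∫ f² + (2/c) ∫ |grad ψ|²`, i.e. `∫ f² ≤ 4/c² ∫ |grad ψ|²`.
When `∫ ψ = 0`, the constant `0` minimises `a ↦ ∫ (ψ - a)²`, so `∫ ψ² ≤ ∫ (ψ - k)²`.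
-/

open MeasureTheory

section

variable {S : Type*} [MeasurableSpace S] {μ : Measure S}

lemma sq_max_zero_add_sq_neg_min_zero (x : ℝ) : max 0 x ^ 2 + (-min 0 x) ^ 2 = x ^ 2 := by
  rcases le_total 0 x with h | h <;> simp [h]

lemma integral_add_integral_le_of_add_le {f g h : S → ℝ} (hf : ∀ s, 0 ≤ f s)
    (hg : ∀ s, 0 ≤ g s) (hle : ∀ s, f s + g s ≤ h s) (hh : Integrable h μ) :
    ∫ s, f s ∂μ + ∫ s, g s ∂μ ≤ ∫ s, h s ∂μ := by
  by_cases hfi : Integrable f μ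
  · by_cases hgi : Integrable g μ
    · rw [← integral_add hfi hgi]
      exact integral_mono (hfi.add hgi) hh hle
    · rw [integral_undef hgi, add_zero]
      exact integral_mono_of_nonneg (ae_of_all _ hf) hh
        (ae_of_all _ fun s => by linarith [hle s, hg s])
  · rw [integral_undef hfi, zero_add]
    exact integral_mono_of_nonneg (ae_of_all _ hg) hh
      (ae_of_all _ fun s => by linarith [hle s, hf s])

lemma integral_sq_max_zero_add_integral_sq_neg_min_zero {f : S → ℝ} (hf : MemLp f 2 μ) :
    ∫ s, max 0 (f s) ^ 2 ∂μ + ∫ s, (-min 0 (f s)) ^ 2 ∂μ = ∫ s, f s ^ 2 ∂μ := by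
  have hpos : Integrable (fun s => max 0 (f s) ^ 2) μ := by
    simpa only [max_comm] using hf.pos_part.integrable_sq
  have hneg : Integrable (fun s => (-min 0 (f s)) ^ 2) μ := by
    refine hf.neg_part.integrable_sq.congr (ae_of_all _ fun s => ?_)
    dsimp only
    rw [← max_neg_neg, neg_zero, max_comm]
  rw [← integral_add hpos hneg]
  simp only [sq_max_zero_add_sq_neg_min_zero]

/-- `Gpos` and `Gneg` play the roles of `|grad_HS (f⁺)²|` and `|grad_HS (f⁻)²|`. -/
lemma integral_sq_le_of_integral_sq_truncation_le {f g Gpos Gneg : S → ℝ} {c : ℝ}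
    (hc : 0 < c) (hf : MemLp f 2 μ) (hg : Integrable (fun s => g s ^ 2) μ)
    (hGpos : ∀ s, 0 ≤ Gpos s) (hGneg : ∀ s, 0 ≤ Gneg s)
    (hFFpos : c * ∫ s, max 0 (f s) ^ 2 ∂μ ≤ ∫ s, Gpos s ∂μ)
    (hFFneg : c * ∫ s, (-min 0 (f s)) ^ 2 ∂μ ≤ ∫ s, Gneg s ∂μ)
    (hchain : ∀ s, Gpos s + Gneg s ≤ 2 * |f s| * |g s|) :
    ∫ s, f s ^ 2 ∂μ ≤ 4 / c ^ 2 * ∫ s, g s ^ 2 ∂μ := by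
  set A := ∫ s, f s ^ 2 ∂μ
  set B := ∫ s, g s ^ 2 ∂μ
  have hc2 : 0 < c / 2 := half_pos hc
  have hamgm : ∀ s, Gpos s + Gneg s ≤ c / 2 * f s ^ 2 + (c / 2)⁻¹ * g s ^ 2 := fun s => by
    simpa only [sq_abs] using (hchain s).trans (two_mul_le_add_mul_sq hc2)
  have hint : Integrable (fun s => c / 2 * f s ^ 2 + (c / 2)⁻¹ * g s ^ 2) μ :=
    (hf.integrable_sq.const_mul _).add (hg.const_mul _)
  have key : c * A ≤ c / 2 * A + (c / 2)⁻¹ * B :=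
    calc c * A
        = c * ∫ s, max 0 (f s) ^ 2 ∂μ + c * ∫ s, (-min 0 (f s)) ^ 2 ∂μ := by
          rw [← mul_add, integral_sq_max_zero_add_integral_sq_neg_min_zero hf]
      _ ≤ ∫ s, Gpos s ∂μ + ∫ s, Gneg s ∂μ := add_le_add hFFpos hFFneg
      _ ≤ ∫ s, (c / 2 * f s ^ 2 + (c / 2)⁻¹ * g s ^ 2) ∂μ :=
          integral_add_integral_le_of_add_le hGpos hGneg hamgm hint
      _ = c / 2 * A + (c / 2)⁻¹ * B := by
          rw [integral_add (hf.integrable_sq.const_mul _) (hg.const_mul _),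
            integral_const_mul, integral_const_mul]
  rw [div_mul_eq_mul_div, le_div_iff₀ (by positivity)]
  have : c / 2 * A ≤ (c / 2)⁻¹ * B := by linarith
  rw [inv_mul_eq_div, le_div_iff₀ hc2] at this
  nlinarith

lemma integral_sq_le_integral_sub_sq_of_integral_eq_zero [IsFiniteMeasure μ] {f : S → ℝ}
    (hf : MemLp f 2 μ) (h0 : ∫ s, f s ∂μ = 0) (k : ℝ) :
    ∫ s, f s ^ 2 ∂μ ≤ ∫ s, (f s - k) ^ 2 ∂μ := by
  have hf1 : Integrable f μ := hf.integrable one_le_two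
  have hlin : Integrable (fun s => k ^ 2 - 2 * k * f s) μ :=
    (integrable_const _).sub (hf1.const_mul _)
  have hexpand : ∫ s, (f s - k) ^ 2 ∂μ = ∫ s, f s ^ 2 ∂μ + μ.real Set.univ * k ^ 2 := by
    calc ∫ s, (f s - k) ^ 2 ∂μ = ∫ s, (f s ^ 2 + (k ^ 2 - 2 * k * f s)) ∂μ := by
          congr 1; funext s; ring
      _ = ∫ s, f s ^ 2 ∂μ + (μ.real Set.univ * k ^ 2 - 2 * k * ∫ s, f s ∂μ) := by
          rw [integral_add hf.integrable_sq hlin,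
            integral_sub (integrable_const _) (hf1.const_mul _), integral_const,
            integral_const_mul, smul_eq_mul]
      _ = _ := by rw [h0, mul_zero, sub_zero]
  rw [hexpand]
  have : 0 ≤ μ.real Set.univ * k ^ 2 := by positivity
  linarith

end

theorem stmt_9_general {S : Type*} [MeasurableSpace S] (σ : Measure S)
    [IsFiniteMeasure σ]
    (grad : (S → ℝ) → S → ℝ) (ψ : S → ℝ) (k Isop0 : ℝ) (hI : 0 < Isop0)
    (hFF : ∀ φ ∈ ({fun s => max 0 (ψ s - k),
        fun s => -(min 0 (ψ s - k))} : Set (S → ℝ)),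
      Isop0 * ∫ s, (φ s) ^ 2 ∂σ ≤ ∫ s, |grad (fun t => (φ t) ^ 2) s| ∂σ)
    (hchain : ∀ s,
      |grad (fun t => (max 0 (ψ t - k)) ^ 2) s|
        + |grad (fun t => (-(min 0 (ψ t - k))) ^ 2) s|
        ≤ 2 * |ψ s - k| * |grad ψ s|)
    (hint2 : Integrable (fun s => (grad ψ s) ^ 2) σ)
    (hintψ : MemLp ψ 2 σ) :
    (∫ s, (ψ s - k) ^ 2 ∂σ ≤ 4 / Isop0 ^ 2 * ∫ s, (grad ψ s) ^ 2 ∂σ) ∧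
    ((∫ s, ψ s ∂σ = 0) →
      ∫ s, ψ s ^ 2 ∂σ ≤ 4 / Isop0 ^ 2 * ∫ s, (grad ψ s) ^ 2 ∂σ) := by
  have hpoincare : ∫ s, (ψ s - k) ^ 2 ∂σ ≤ 4 / Isop0 ^ 2 * ∫ s, (grad ψ s) ^ 2 ∂σ :=
    integral_sq_le_of_integral_sq_truncation_le hI (hintψ.sub (memLp_const k)) hint2
      (fun _ => abs_nonneg _) (fun _ => abs_nonneg _)
      (hFF _ (Set.mem_insert _ _)) (hFF _ (Set.mem_insert_of_mem _ rfl)) hchain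
  exact ⟨hpoincare, fun h0 =>
    (integral_sq_le_integral_sub_sq_of_integral_eq_zero hintψ h0 k).trans hpoincare⟩

/-- Poincaré-type consequence of the Neumann isoperimetric constant: if `k` is a median
level for `ψ` and the Federer–Fleming inequality holds for (squares of) the truncations
`ψ⁺ = max{0, ψ−k}` and `ψ⁻ = −min{0, ψ−k}`, then
`∫ |ψ−k|² dσ ≤ (4 / Isop₀²) ∫ |grad_HS ψ|² dσ`; moreover if `∫ ψ dσ = 0` then
`∫ ψ² dσ ≤ (4 / Isop₀²) ∫ |grad_HS ψ|² dσ`. -/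
theorem stmt_9 {S : Type*} [MeasurableSpace S] (σ : Measure S)
    [IsFiniteMeasure σ]
    (grad : (S → ℝ) → S → ℝ) (ψ : S → ℝ) (k Isop0 : ℝ) (hI : 0 < Isop0)
    (hk1 : σ Set.univ / 2 ≤ σ {s | k ≤ ψ s})
    (hk2 : σ Set.univ / 2 ≤ σ {s | ψ s ≤ k})
    (hFF : ∀ φ ∈ ({fun s => max 0 (ψ s - k),
        fun s => -(min 0 (ψ s - k))} : Set (S → ℝ)),
      Isop0 * ∫ s, (φ s) ^ 2 ∂σ ≤ ∫ s, |grad (fun t => (φ t) ^ 2) s| ∂σ)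
    (hchain : ∀ s,
      |grad (fun t => (max 0 (ψ t - k)) ^ 2) s|
        + |grad (fun t => (-(min 0 (ψ t - k))) ^ 2) s|
        ≤ 2 * |ψ s - k| * |grad ψ s|)
    (hint1 : Integrable (fun s => (ψ s - k) ^ 2) σ)
    (hint2 : Integrable (fun s => (grad ψ s) ^ 2) σ)
    (hintψ : MemLp ψ 2 σ) :
    (∫ s, (ψ s - k) ^ 2 ∂σ ≤ 4 / Isop0 ^ 2 * ∫ s, (grad ψ s) ^ 2 ∂σ) ∧
    ((∫ s, ψ s ∂σ = 0) →
      ∫ s, ψ s ^ 2 ∂σ ≤ 4 / Isop0 ^ 2 * ∫ s, (grad ψ s) ^ 2 ∂σ) :=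
  stmt_9_general σ grad ψ k Isop0 hI hFF hchain hint2 hintψ
end
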